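/- arXiv:1608.08203 — 7 statements merged into one kernel-verified Lean document; each statement's English description precedes it below -/
import Mathlib

section
/- Let ρ : [N] × [N] → ℝ≥0 be a semi-ultrametric on [N] (i.e., symmetric, zero on the diagonal, and satisfying ρ(i,k) ≤ max(ρ(i,j), ρ(j,k)) for all i,j,k). Define v(i) = (1/2)·min_{j ≠ i} ρ(i,j) and r(i,j) = (ρ(i,j) − v(i) − v(j))·1_{i≠j}. Then r is nonnegative and satisfies the triangle inequality r(i,k) ≤ r(i,j) + r(j,k) for all i,j,k ∈ [N]. -/
/-- Decomposition of a semi-ultrametric at its external branches: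
`r` is nonnegative and satisfies the triangle inequality. -/
theorem stmt1 (N : ℕ) (hN : 2 ≤ N) (ρ : Fin N → Fin N → ℝ)
    (hnn : ∀ i j, 0 ≤ ρ i j) (hsym : ∀ i j, ρ i j = ρ j i)
    (hdiag : ∀ i, ρ i i = 0)
    (hultra : ∀ i j k, ρ i k ≤ max (ρ i j) (ρ j k))
    (v : Fin N → ℝ)
    (hv : ∀ i, v i = (1 / 2) * sInf {x : ℝ | ∃ j, j ≠ i ∧ x = ρ i j})
    (r : Fin N → Fin N → ℝ)
    (hr : ∀ i j, r i j = if i = j then 0 else ρ i j - v i - v j) :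
    (∀ i j, 0 ≤ r i j) ∧ (∀ i j k, r i k ≤ r i j + r j k) := by
  haveI : Nontrivial (Fin N) := Fin.nontrivial_iff_two_le.mpr hN
  have hbdd : ∀ i : Fin N, BddBelow {x : ℝ | ∃ j, j ≠ i ∧ x = ρ i j} := by
    intro i
    exact ⟨0, fun x ⟨j, _, hx⟩ => hx ▸ hnn i j⟩
  have hne : ∀ i : Fin N, ({x : ℝ | ∃ j, j ≠ i ∧ x = ρ i j}).Nonempty := by
    intro i
    obtain ⟨j, hj⟩ := exists_ne i
    exact ⟨ρ i j, j, hj, rfl⟩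
  have hvle : ∀ i j : Fin N, j ≠ i → 2 * v i ≤ ρ i j := by
    intro i j hj
    have := csInf_le (hbdd i) (⟨j, hj, rfl⟩ : ρ i j ∈ {x : ℝ | ∃ j, j ≠ i ∧ x = ρ i j})
    rw [hv i]; linarith
  have hvnn : ∀ i : Fin N, 0 ≤ v i := by
    intro i
    have : (0 : ℝ) ≤ sInf {x : ℝ | ∃ j, j ≠ i ∧ x = ρ i j} :=
      le_csInf (hne i) (fun x ⟨j, _, hx⟩ => hx ▸ hnn i j)
    rw [hv i]; linarith
  have hrnn : ∀ i j, 0 ≤ r i j := by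
    intro i j
    rw [hr i j]
    by_cases h : i = j
    · simp [h]
    · simp only [h, if_false]
      have h1 : 2 * v i ≤ ρ i j := hvle i j (fun hji => h hji.symm)
      have h2 : 2 * v j ≤ ρ j i := hvle j i (fun hij => h hij)
      rw [hsym j i] at h2
      linarith
  refine ⟨hrnn, fun i j k => ?_⟩
  by_cases hik : i = k
  · rw [hr i k, if_pos hik]
    exact add_nonneg (hrnn i j) (hrnn j k)
  by_cases hij : i = j
  · subst hij
    rw [hr i i]; simp
  by_cases hjk : j = k
  · subst hjk
    rw [hr j j]; simp
  rw [hr i k, hr i j, hr j k]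
  simp only [hik, hij, hjk, if_false]
  have h1 : 2 * v j ≤ ρ i j := by
    have := hvle j i (fun h => hij h); rwa [hsym j i] at this
  have h2 : 2 * v j ≤ ρ j k := hvle j k (fun h => hjk h.symm)
  have h3 := hultra i j k
  rcases max_cases (ρ i j) (ρ j k) with ⟨hm, _⟩ | ⟨hm, _⟩ <;> rw [hm] at h3 <;> linarith
end

section
/- Let ρ be a semi-ultrametric on a finite set S with at least 2 elements. For i ∈ S define the minimal clade set C_i = { j ∈ S, j ≠ i : ρ(i,j) = min_{ℓ ≠ i} ρ(i,ℓ) }. If i ≠ j and C_i ∩ C_j ≠ ∅, then j ∈ C_i or i ∈ C_j. -/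
/-- If the minimal clades of two distinct points of a finite semi-ultrametric space
intersect, then one of the points belongs to the minimal clade of the other. -/
theorem stmt4 {S : Type*} [Fintype S] (hS : 2 ≤ Fintype.card S)
    (ρ : S → S → ℝ)
    (hnn : ∀ i j, 0 ≤ ρ i j) (hsym : ∀ i j, ρ i j = ρ j i)
    (hdiag : ∀ i, ρ i i = 0)
    (hultra : ∀ i j k, ρ i k ≤ max (ρ i j) (ρ j k))
    (C : S → Set S)
    (hC : ∀ i, C i = {j | j ≠ i ∧ ρ i j = sInf {x : ℝ | ∃ l, l ≠ i ∧ x = ρ i l}})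
    (i j : S) (hij : i ≠ j) (hint : (C i ∩ C j).Nonempty) :
    j ∈ C i ∨ i ∈ C j := by
  obtain ⟨k, hki, hkj⟩ := hint
  rw [hC i] at hki
  rw [hC j] at hkj
  obtain ⟨hk1, hk2⟩ := hki
  obtain ⟨hk3, hk4⟩ := hkj
  have bddi : BddBelow {x : ℝ | ∃ l, l ≠ i ∧ x = ρ i l} :=
    ⟨0, fun x ⟨l, _, hx⟩ => hx ▸ hnn i l⟩
  have bddj : BddBelow {x : ℝ | ∃ l, l ≠ j ∧ x = ρ j l} :=
    ⟨0, fun x ⟨l, _, hx⟩ => hx ▸ hnn j l⟩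
  have hmi : sInf {x : ℝ | ∃ l, l ≠ i ∧ x = ρ i l} ≤ ρ i j :=
    csInf_le bddi ⟨j, hij.symm, rfl⟩
  have hmj : sInf {x : ℝ | ∃ l, l ≠ j ∧ x = ρ j l} ≤ ρ j i :=
    csInf_le bddj ⟨i, hij, rfl⟩
  rcases le_total (sInf {x : ℝ | ∃ l, l ≠ i ∧ x = ρ i l})
      (sInf {x : ℝ | ∃ l, l ≠ j ∧ x = ρ j l}) with h | h
  · right
    rw [hC j]
    refine ⟨hij, le_antisymm ?_ hmj⟩
    calc ρ j i ≤ max (ρ j k) (ρ k i) := hultra j k i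
    _ ≤ _ := by
        rw [hk4, hsym k i, hk2]
        exact max_le le_rfl h
  · left
    rw [hC i]
    refine ⟨hij.symm, le_antisymm ?_ hmi⟩
    calc ρ i j ≤ max (ρ i k) (ρ k j) := hultra i k j
    _ ≤ _ := by
        rw [hk2, hsym k j, hk4]
        exact max_le le_rfl h
end

section
/- Let x, y ∈ Δ = { x ∈ [0,1]^ℕ : x(1) ≥ x(2) ≥ ... ≥ 0, Σ x(i) ≤ 1 }, let n ∈ ℕ, and let π be a partition of [n]. Let κ∞_n(x,·) denote the Kingman paintbox kernel: with U_1,...,U_n i.i.d. uniform on [0,1], it is the law of the partition in which i and j are in the same block iff U_i and U_j fall in the same interval (Σ_{k<ℓ} x(k), Σ_{k≤ℓ} x(k)) for some ℓ. Then |κ∞_n(x,π) − κ∞_n(y,π)| ≤ n·Σ_{i} |x(i) − y(i)|. -/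
open MeasureTheory Set

/-- Partial sums of a paintbox: left endpoint of the `ℓ`-th paintbox interval. -/
noncomputable def cumul (x : ℕ → ℝ) (ℓ : ℕ) : ℝ := ∑ k ∈ Finset.range ℓ, x k

/-- Kingman paintbox kernel: the probability, under `n` i.i.d. uniforms on `[0,1]`,
that the induced paintbox partition (as an equivalence relation) equals `P`. -/
noncomputable def paintbox (n : ℕ) (x : ℕ → ℝ) (P : Fin n → Fin n → Prop) : ℝ :=
  ((Measure.pi fun _ : Fin n => volume.restrict (Icc (0:ℝ) 1))
    {u | ∀ i j, P i j ↔ (i = j ∨ ∃ ℓ : ℕ,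
      u i ∈ Ioo (cumul x ℓ) (cumul x ℓ + x ℓ) ∧
      u j ∈ Ioo (cumul x ℓ) (cumul x ℓ + x ℓ))}).toReal

open scoped ENNReal

noncomputable def pbMeas : Measure ℝ := volume.restrict (Icc (0:ℝ) 1)

lemma pbMeas_prob : IsProbabilityMeasure pbMeas := by
  constructor
  simp [pbMeas, Real.volume_Icc]

def pbEv (n : ℕ) (x : ℕ → ℝ) (P : Fin n → Fin n → Prop) : Set (Fin n → ℝ) :=
  {u | ∀ i j, P i j ↔ (i = j ∨ ∃ ℓ : ℕ,
      u i ∈ Ioo (cumul x ℓ) (cumul x ℓ + x ℓ) ∧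
      u j ∈ Ioo (cumul x ℓ) (cumul x ℓ + x ℓ))}

lemma paintbox_def (n : ℕ) (x : ℕ → ℝ) (P : Fin n → Fin n → Prop) :
    paintbox n x P = ((Measure.pi fun _ : Fin n => pbMeas) (pbEv n x P)).toReal := rfl

lemma pbEv_meas (n : ℕ) (x : ℕ → ℝ) (P : Fin n → Fin n → Prop) :
    MeasurableSet (pbEv n x P) := by
  have : pbEv n x P = ⋂ i, ⋂ j, {u : Fin n → ℝ | P i j ↔ (i = j ∨ ∃ ℓ : ℕ,
      u i ∈ Ioo (cumul x ℓ) (cumul x ℓ + x ℓ) ∧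
      u j ∈ Ioo (cumul x ℓ) (cumul x ℓ + x ℓ))} := by
    ext u; simp [pbEv]
  rw [this]
  refine MeasurableSet.iInter fun i => MeasurableSet.iInter fun j => ?_
  have hQ : MeasurableSet {u : Fin n → ℝ | i = j ∨ ∃ ℓ : ℕ,
      u i ∈ Ioo (cumul x ℓ) (cumul x ℓ + x ℓ) ∧
      u j ∈ Ioo (cumul x ℓ) (cumul x ℓ + x ℓ)} := by
    have h2 : {u : Fin n → ℝ | i = j ∨ ∃ ℓ : ℕ,
        u i ∈ Ioo (cumul x ℓ) (cumul x ℓ + x ℓ) ∧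
        u j ∈ Ioo (cumul x ℓ) (cumul x ℓ + x ℓ)}
        = {u : Fin n → ℝ | i = j} ∪ ⋃ ℓ : ℕ,
          ((fun u : Fin n → ℝ => u i) ⁻¹' Ioo (cumul x ℓ) (cumul x ℓ + x ℓ) ∩
           (fun u : Fin n → ℝ => u j) ⁻¹' Ioo (cumul x ℓ) (cumul x ℓ + x ℓ)) := by
      ext u; simp [Set.mem_iUnion, Set.mem_setOf_eq]
    rw [h2]
    refine MeasurableSet.union ?_ (MeasurableSet.iUnion fun ℓ =>
      ((measurable_pi_apply i) measurableSet_Ioo).inter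
      ((measurable_pi_apply j) measurableSet_Ioo))
    by_cases hij : i = j <;> simp [hij]
  by_cases hp : P i j
  · have he : {u : Fin n → ℝ | P i j ↔ (i = j ∨ ∃ ℓ : ℕ,
        u i ∈ Ioo (cumul x ℓ) (cumul x ℓ + x ℓ) ∧
        u j ∈ Ioo (cumul x ℓ) (cumul x ℓ + x ℓ))} = {u : Fin n → ℝ | i = j ∨ ∃ ℓ : ℕ,
        u i ∈ Ioo (cumul x ℓ) (cumul x ℓ + x ℓ) ∧
        u j ∈ Ioo (cumul x ℓ) (cumul x ℓ + x ℓ)} := by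
      ext u; simp only [Set.mem_setOf_eq]
      exact ⟨fun h => h.mp hp, fun h => iff_of_true hp h⟩
    rw [he]; exact hQ
  · have he : {u : Fin n → ℝ | P i j ↔ (i = j ∨ ∃ ℓ : ℕ,
        u i ∈ Ioo (cumul x ℓ) (cumul x ℓ + x ℓ) ∧
        u j ∈ Ioo (cumul x ℓ) (cumul x ℓ + x ℓ))} = {u : Fin n → ℝ | i = j ∨ ∃ ℓ : ℕ,
        u i ∈ Ioo (cumul x ℓ) (cumul x ℓ + x ℓ) ∧
        u j ∈ Ioo (cumul x ℓ) (cumul x ℓ + x ℓ)}ᶜ := by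
      ext u; simp only [Set.mem_setOf_eq, Set.mem_compl_iff]
      exact ⟨fun h hq => hp (h.mpr hq), fun h => ⟨fun hpij => absurd hpij hp, fun hq => absurd hq h⟩⟩
    rw [he]; exact hQ.compl

lemma pb_eval_preimage (n : ℕ) (i : Fin n) (s : Set ℝ) :
    (Measure.pi fun _ : Fin n => pbMeas) ((fun u : Fin n → ℝ => u i) ⁻¹' s) = pbMeas s := by
  haveI := pbMeas_prob
  classical
  have h : (fun u : Fin n → ℝ => u i) ⁻¹' s
      = Set.pi univ (Function.update (fun _ : Fin n => (univ : Set ℝ)) i s) := by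
    rw [← Set.eval_preimage]
  rw [h, Measure.pi_pi]
  rw [Finset.prod_eq_single i (fun j _ hj => by simp [Function.update_of_ne hj]) (by simp)]
  simp

lemma pb_key (n : ℕ) (a b : ℕ → ℝ) (P : Fin n → Fin n → Prop) (T : ℝ → ℝ)
    (hT : MeasurePreserving T pbMeas pbMeas) (N : Set ℝ)
    (h : ∀ t ∈ Icc (0:ℝ) 1 \ N, ∀ ℓ : ℕ,
       (t ∈ Ioo (cumul b ℓ) (cumul b ℓ + b ℓ) ↔ T t ∈ Ioo (cumul a ℓ) (cumul a ℓ + a ℓ))) :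
    |paintbox n b P - paintbox n a P| ≤ n * (pbMeas N).toReal := by
  haveI := pbMeas_prob
  set ν := Measure.pi fun _ : Fin n => pbMeas with hν
  haveI : IsProbabilityMeasure ν := Measure.pi.instIsProbabilityMeasure _
  set Φ : (Fin n → ℝ) → (Fin n → ℝ) := fun u i => T (u i) with hΦdef
  have hΦ : MeasurePreserving Φ ν ν := measurePreserving_pi _ _ (fun _ => hT)
  have hEa : ν (Φ ⁻¹' pbEv n a P) = ν (pbEv n a P) :=
    hΦ.measure_preimage (pbEv_meas n a P).nullMeasurableSet
  set Nc : Set ℝ := N ∪ (Icc (0:ℝ) 1)ᶜ with hNc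
  set D : Set (Fin n → ℝ) := ⋃ i : Fin n, (fun u => u i) ⁻¹' Nc with hD
  have hiff : ∀ u, u ∉ D → (u ∈ pbEv n b P ↔ Φ u ∈ pbEv n a P) := by
    intro u hu
    have hmem : ∀ i : Fin n, u i ∈ Icc (0:ℝ) 1 \ N := by
      intro i
      have : u i ∉ Nc := fun hui => hu (Set.mem_iUnion.2 ⟨i, hui⟩)
      rw [hNc] at this
      simp only [Set.mem_union, Set.mem_compl_iff, not_or, not_not] at this
      exact ⟨this.2, this.1⟩
    have hcol : ∀ (i : Fin n) (ℓ : ℕ),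
        (u i ∈ Ioo (cumul b ℓ) (cumul b ℓ + b ℓ) ↔
          T (u i) ∈ Ioo (cumul a ℓ) (cumul a ℓ + a ℓ)) := fun i ℓ => h _ (hmem i) ℓ
    simp only [pbEv, Set.mem_setOf_eq]
    exact forall₂_congr fun i j =>
      iff_congr Iff.rfl (or_congr Iff.rfl (exists_congr fun ℓ =>
        and_congr (hcol i ℓ) (hcol j ℓ)))
  have hb : ν (pbEv n b P) ≤ ν (pbEv n a P) + ν D := by
    calc ν (pbEv n b P) ≤ ν (Φ ⁻¹' pbEv n a P ∪ D) := by
          refine measure_mono fun u hu => ?_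
          by_cases hDu : u ∈ D
          · exact Or.inr hDu
          · exact Or.inl ((hiff u hDu).1 hu)
      _ ≤ ν (Φ ⁻¹' pbEv n a P) + ν D := measure_union_le _ _
      _ = ν (pbEv n a P) + ν D := by rw [hEa]
  have ha : ν (pbEv n a P) ≤ ν (pbEv n b P) + ν D := by
    calc ν (pbEv n a P) = ν (Φ ⁻¹' pbEv n a P) := hEa.symm
      _ ≤ ν (pbEv n b P ∪ D) := by
          refine measure_mono fun u hu => ?_
          by_cases hDu : u ∈ D
          · exact Or.inr hDu
          · exact Or.inl ((hiff u hDu).2 hu)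
      _ ≤ ν (pbEv n b P) + ν D := measure_union_le _ _
  have hDle : ν D ≤ (n : ℝ≥0∞) * pbMeas N := by
    calc ν D ≤ ∑ i : Fin n, ν ((fun u : Fin n → ℝ => u i) ⁻¹' Nc) :=
          measure_iUnion_fintype_le _ _
      _ = ∑ _i : Fin n, pbMeas Nc := by
          refine Finset.sum_congr rfl fun i _ => pb_eval_preimage n i Nc
      _ = (n : ℝ≥0∞) * pbMeas Nc := by
          simp [Finset.sum_const, nsmul_eq_mul]
      _ ≤ (n : ℝ≥0∞) * (pbMeas N + pbMeas (Icc (0:ℝ) 1)ᶜ) := by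
          exact mul_le_mul_right (measure_union_le _ _) _
      _ = (n : ℝ≥0∞) * pbMeas N := by
          have : pbMeas (Icc (0:ℝ) 1)ᶜ = 0 := by
            rw [pbMeas, Measure.restrict_apply (measurableSet_Icc.compl)]
            simp
          rw [this, add_zero]
  -- convert to reals
  have hfin : ∀ s : Set (Fin n → ℝ), ν s ≠ ⊤ := fun s => (measure_lt_top ν s).ne
  have hDfin : ν D ≠ ⊤ := hfin D
  have hNfin : pbMeas N ≠ ⊤ := (measure_lt_top pbMeas N).ne
  have hDreal : (ν D).toReal ≤ n * (pbMeas N).toReal := by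
    have := ENNReal.toReal_mono (by finiteness) hDle
    rwa [ENNReal.toReal_mul, ENNReal.toReal_natCast] at this
  rw [paintbox_def, paintbox_def]
  rw [abs_sub_le_iff]
  constructor
  · have h1 : (ν (pbEv n b P)).toReal ≤ (ν (pbEv n a P)).toReal + (ν D).toReal := by
      have := ENNReal.toReal_mono (by finiteness) hb
      rwa [ENNReal.toReal_add (hfin _) hDfin] at this
    linarith
  · have h1 : (ν (pbEv n a P)).toReal ≤ (ν (pbEv n b P)).toReal + (ν D).toReal := by
      have := ENNReal.toReal_mono (by finiteness) ha
      rwa [ENNReal.toReal_add (hfin _) hDfin] at this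
    linarith

lemma cumul_nonneg {a : ℕ → ℝ} (ha : ∀ k, 0 ≤ a k) (ℓ : ℕ) : 0 ≤ cumul a ℓ :=
  Finset.sum_nonneg fun k _ => ha k

lemma cumul_mono {a : ℕ → ℝ} (ha : ∀ k, 0 ≤ a k) : Monotone (cumul a) := by
  intro i j hij
  exact Finset.sum_le_sum_of_subset_of_nonneg (Finset.range_subset_range.2 hij)
    (fun k _ _ => ha k)

lemma cumul_succ (a : ℕ → ℝ) (ℓ : ℕ) : cumul a (ℓ + 1) = cumul a ℓ + a ℓ :=
  Finset.sum_range_succ a ℓ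

lemma cumul_update_of_le {a : ℕ → ℝ} {m ℓ : ℕ} (c : ℝ) (h : ℓ ≤ m) :
    cumul (Function.update a m c) ℓ = cumul a ℓ := by
  unfold cumul
  refine Finset.sum_congr rfl fun k hk => ?_
  rw [Finset.mem_range] at hk
  exact Function.update_of_ne (by omega) _ _

lemma cumul_update_of_gt {a : ℕ → ℝ} {m ℓ : ℕ} (c : ℝ) (h : m < ℓ) :
    cumul (Function.update a m c) ℓ = cumul a ℓ - (a m - c) := by
  classical
  unfold cumul
  have hm : m ∈ Finset.range ℓ := Finset.mem_range.2 h
  rw [Finset.sum_update_of_mem hm, ← Finset.erase_eq, Finset.sum_erase_eq_sub hm]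
  ring

lemma pb_step (n : ℕ) (a : ℕ → ℝ) (m : ℕ) (c : ℝ) (P : Fin n → Fin n → Prop)
    (ha0 : ∀ k, 0 ≤ a k) (hc0 : 0 ≤ c) (hca : c ≤ a m) (hle : ∀ ℓ, cumul a ℓ ≤ 1) :
    |paintbox n (Function.update a m c) P - paintbox n a P| ≤ n * (a m - c) := by
  haveI := pbMeas_prob
  set b := Function.update a m c with hbdef
  set δ := a m - c with hδdef
  set p := cumul a m + c with hpdef
  have hb0 : ∀ k, 0 ≤ b k := by
    intro k
    rw [hbdef]
    by_cases hk : k = m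
    · subst hk; simp [Function.update_self, hc0]
    · simp [Function.update_of_ne hk, ha0 k]
  have hδ0 : (0:ℝ) ≤ δ := by simp [hδdef]; linarith
  have hp0 : (0:ℝ) ≤ p := add_nonneg (cumul_nonneg ha0 m) hc0
  have hpδ : p + δ = cumul a (m + 1) := by rw [cumul_succ]; ring
  have hpδ1 : p + δ ≤ 1 := by rw [hpδ]; exact hle (m + 1)
  have hp1 : p ≤ 1 - δ := by linarith
  have hδ1 : δ ≤ 1 := by linarith
  -- cumul b facts
  have hble : ∀ ℓ, ℓ ≤ m → cumul b ℓ = cumul a ℓ := fun ℓ h => cumul_update_of_le c h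
  have hbgt : ∀ ℓ, m < ℓ → cumul b ℓ = cumul a ℓ - δ := fun ℓ h => cumul_update_of_gt c h
  have hbm1 : cumul b (m + 1) = p := by
    rw [hbgt (m+1) (Nat.lt_succ_self m), ← hpδ]; ring
  -- the rotation
  set T : ℝ → ℝ := fun t => if t < p then t else if t + δ < 1 then t + δ else t + (p + δ - 1)
    with hTdef
  have hTmeas : Measurable T := by
    refine Measurable.ite (measurableSet_lt measurable_id measurable_const) measurable_id ?_
    exact Measurable.ite (measurableSet_lt (measurable_id.add_const δ) measurable_const)
      (measurable_id.add_const δ) (measurable_id.add_const (p + δ - 1))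
  -- map of each piece
  have piece : ∀ (s : Set ℝ) (d : ℝ), MeasurableSet s → (∀ t ∈ s, T t = t + d) →
      Measure.map T (volume.restrict s) = volume.restrict ((fun t => t + d) '' s) := by
    intro s d hs hTd
    have h1 : Measure.map T (volume.restrict s) = Measure.map (fun t => t + d)
        (volume.restrict s) :=
      Measure.map_congr (Filter.eventuallyEq_of_mem (self_mem_ae_restrict hs) hTd)
    have h2 : (fun t : ℝ => t + d) ⁻¹' ((fun t : ℝ => t + d) '' s) = s :=
      Set.preimage_image_eq s (add_left_injective d)
    have h3 : MeasurableSet ((fun t : ℝ => t + d) '' s) := by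
      have : (fun t : ℝ => t + d) '' s = (fun t : ℝ => t - d) ⁻¹' s := by
        ext t
        simp only [Set.mem_image, Set.mem_preimage]
        constructor
        · rintro ⟨u, hu, rfl⟩; simpa using hu
        · intro h; exact ⟨t - d, h, by ring⟩
      rw [this]
      exact (measurable_id.sub_const d) hs
    rw [h1]
    calc Measure.map (fun t : ℝ => t + d) (volume.restrict s)
        = Measure.map (fun t : ℝ => t + d)
            (volume.restrict ((fun t : ℝ => t + d) ⁻¹' ((fun t : ℝ => t + d) '' s))) := by
          rw [h2]
      _ = (Measure.map (fun t : ℝ => t + d) volume).restrict ((fun t : ℝ => t + d) '' s) :=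
          (Measure.restrict_map (measurable_id.add_const d) h3).symm
      _ = volume.restrict ((fun t : ℝ => t + d) '' s) := by
          rw [map_add_right_eq_self volume d]
  -- images of the three pieces
  have hi1 : (fun t : ℝ => t + (0:ℝ)) '' Ico 0 p = Ico 0 p := by
    simp [Set.image_id']
  have hi2 : (fun t : ℝ => t + δ) '' Ico p (1 - δ) = Ico (p + δ) 1 := by
    rw [Set.image_add_const_Ico]
    norm_num
  have hi3 : (fun t : ℝ => t + (p + δ - 1)) '' Ico (1 - δ) 1 = Ico p (p + δ) := by
    rw [Set.image_add_const_Ico]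
    ring_nf
  have hT1 : ∀ t ∈ Ico (0:ℝ) p, T t = t + 0 := by
    intro t ht
    show (if t < p then t else if t + δ < 1 then t + δ else t + (p + δ - 1)) = t + 0
    rw [if_pos ht.2, add_zero]
  have hT2 : ∀ t ∈ Ico p (1 - δ), T t = t + δ := by
    intro t ht
    show (if t < p then t else if t + δ < 1 then t + δ else t + (p + δ - 1)) = t + δ
    rw [if_neg (not_lt.2 ht.1), if_pos (by linarith [ht.2])]
  have hT3 : ∀ t ∈ Ico (1 - δ) 1, T t = t + (p + δ - 1) := by
    intro t ht
    show (if t < p then t else if t + δ < 1 then t + δ else t + (p + δ - 1)) = t + (p + δ - 1)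
    rw [if_neg (not_lt.2 (le_trans hp1 ht.1)), if_neg (by push_neg; linarith [ht.1])]
  -- measure preserving
  have hsplit : volume.restrict (Ico (0:ℝ) 1)
      = volume.restrict (Ico 0 p) + volume.restrict (Ico p (1 - δ))
        + volume.restrict (Ico (1 - δ) 1) := by
    rw [← Measure.restrict_union (Set.Ico_disjoint_Ico_same) measurableSet_Ico,
      Set.Ico_union_Ico_eq_Ico hp0 hp1,
      ← Measure.restrict_union (Set.Ico_disjoint_Ico_same) measurableSet_Ico,
      Set.Ico_union_Ico_eq_Ico (by linarith : (0:ℝ) ≤ 1 - δ) (by linarith : (1:ℝ) - δ ≤ 1)]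
  have hT : MeasurePreserving T pbMeas pbMeas := by
    refine ⟨hTmeas, ?_⟩
    have hIcc : pbMeas = volume.restrict (Ico (0:ℝ) 1) :=
      (Measure.restrict_congr_set Ico_ae_eq_Icc).symm
    rw [hIcc, hsplit, Measure.map_add _ _ hTmeas, Measure.map_add _ _ hTmeas,
      piece _ _ measurableSet_Ico hT1, piece _ _ measurableSet_Ico hT2,
      piece _ _ measurableSet_Ico hT3, hi1, hi2, hi3]
    rw [add_assoc, add_comm (volume.restrict (Ico (p+δ) 1)) (volume.restrict (Ico p (p+δ))),
      ← add_assoc]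
    rw [← Measure.restrict_union (Set.Ico_disjoint_Ico_same) measurableSet_Ico,
      Set.Ico_union_Ico_eq_Ico hp0 (by linarith),
      ← Measure.restrict_union (Set.Ico_disjoint_Ico_same) measurableSet_Ico,
      Set.Ico_union_Ico_eq_Ico (by linarith) (by linarith)]
    exact hsplit
  -- color claim
  have hcolor : ∀ t ∈ Icc (0:ℝ) 1 \ Icc (1 - δ) 1, ∀ ℓ : ℕ,
      (t ∈ Ioo (cumul b ℓ) (cumul b ℓ + b ℓ) ↔ T t ∈ Ioo (cumul a ℓ) (cumul a ℓ + a ℓ)) := by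
    rintro t ⟨⟨ht0, ht1⟩, htN⟩ ℓ
    have ht1δ : t < 1 - δ := by
      by_contra hcon
      exact htN ⟨not_lt.1 hcon, ht1⟩
    rw [← cumul_succ b ℓ, ← cumul_succ a ℓ]
    rcases lt_or_ge t p with htp | htp
    · have hTt : T t = t := by
        show (if t < p then t else if t + δ < 1 then t + δ else t + (p + δ - 1)) = t
        rw [if_pos htp]
      rw [hTt]
      rcases lt_or_ge m ℓ with hmℓ | hmℓ
      · -- ℓ > m : both sides false
        have h1 : p ≤ cumul b ℓ := by
          rw [hbgt ℓ hmℓ]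
          have h := cumul_mono ha0 (Nat.succ_le_of_lt hmℓ)
          linarith
        have h2 : p + δ ≤ cumul a ℓ := by
          rw [hpδ]; exact cumul_mono ha0 (Nat.succ_le_of_lt hmℓ)
        constructor
        · rintro ⟨hl, -⟩; linarith
        · rintro ⟨hl, -⟩; linarith
      · rcases eq_or_lt_of_le hmℓ with hmeq | hmlt
        · -- ℓ = m
          subst hmeq
          rw [hble ℓ le_rfl, hbm1]
          constructor
          · rintro ⟨h1, -⟩; exact ⟨h1, by linarith⟩
          · rintro ⟨h1, -⟩; exact ⟨h1, htp⟩
        · -- ℓ < m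
          rw [hble ℓ (le_of_lt hmlt), hble (ℓ+1) hmlt]
    · -- p ≤ t
      have hTt : T t = t + δ := by
        show (if t < p then t else if t + δ < 1 then t + δ else t + (p + δ - 1)) = t + δ
        rw [if_neg (not_lt.2 htp), if_pos (by linarith)]
      rw [hTt]
      rcases lt_or_ge m ℓ with hmℓ | hmℓ
      · rw [hbgt ℓ hmℓ, hbgt (ℓ+1) (Nat.lt_succ_of_lt hmℓ)]
        constructor
        · rintro ⟨h1, h2⟩; exact ⟨by linarith, by linarith⟩
        · rintro ⟨h1, h2⟩; exact ⟨by linarith, by linarith⟩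
      · -- ℓ ≤ m : both sides false
        have h1 : cumul b (ℓ + 1) ≤ p := by
          rcases eq_or_lt_of_le hmℓ with hmeq | hmlt
          · subst hmeq; rw [hbm1]
          · calc cumul b (ℓ + 1) = cumul a (ℓ + 1) := hble (ℓ+1) hmlt
              _ ≤ cumul a m := cumul_mono ha0 hmlt
              _ ≤ p := by rw [hpdef]; linarith
        have h2 : cumul a (ℓ + 1) ≤ p + δ := by
          rw [hpδ]; exact cumul_mono ha0 (Nat.succ_le_succ hmℓ)
        constructor
        · rintro ⟨-, h4⟩; linarith
        · rintro ⟨-, h4⟩; linarith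
  -- apply the key lemma
  have hmain := pb_key n a b P T hT (Icc (1 - δ) 1) hcolor
  have hmeasN : (pbMeas (Icc (1 - δ) 1)).toReal ≤ δ := by
    have h1 : pbMeas (Icc (1 - δ) 1) ≤ volume (Icc (1 - δ) 1) := by
      rw [pbMeas, Measure.restrict_apply measurableSet_Icc]
      exact measure_mono Set.inter_subset_left
    have h2 : volume (Icc (1 - δ) 1) = ENNReal.ofReal δ := by
      rw [Real.volume_Icc]; norm_num
    calc (pbMeas (Icc (1 - δ) 1)).toReal ≤ (volume (Icc (1 - δ) 1)).toReal :=
          ENNReal.toReal_mono (by rw [h2]; exact ENNReal.ofReal_ne_top) h1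
      _ = δ := by rw [h2, ENNReal.toReal_ofReal hδ0]
  calc |paintbox n b P - paintbox n a P| ≤ n * (pbMeas (Icc (1 - δ) 1)).toReal := hmain
    _ ≤ n * δ := by
        apply mul_le_mul_of_nonneg_left hmeasN (Nat.cast_nonneg n)

lemma pb_tail (n : ℕ) (b w : ℕ → ℝ) (M : ℕ) (P : Fin n → Fin n → Prop)
    (hb0 : ∀ k, 0 ≤ b k) (hw0 : ∀ k, 0 ≤ w k) (hwb : ∀ k, w k ≤ b k)
    (hagree : ∀ k, k < M → b k = w k) (hbs : Summable b) :
    |paintbox n b P - paintbox n w P| ≤ n * ((∑' k, b k) - cumul w M) := by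
  haveI := pbMeas_prob
  have hws : Summable w := Summable.of_nonneg_of_le hw0 hwb hbs
  have hcum_eq : cumul b M = cumul w M := by
    unfold cumul
    exact Finset.sum_congr rfl fun k hk => hagree k (Finset.mem_range.1 hk)
  set S := ∑' k, b k with hS
  have hwS : ∑' k, w k ≤ S := Summable.tsum_le_tsum hwb hws hbs
  have hcolor : ∀ t ∈ Icc (0:ℝ) 1 \ Icc (cumul w M) S, ∀ ℓ : ℕ,
      (t ∈ Ioo (cumul b ℓ) (cumul b ℓ + b ℓ) ↔ id t ∈ Ioo (cumul w ℓ) (cumul w ℓ + w ℓ)) := by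
    rintro t ⟨⟨ht0, ht1⟩, htN⟩ ℓ
    simp only [id]
    rw [← cumul_succ b ℓ, ← cumul_succ w ℓ]
    have htcase : t < cumul w M ∨ S < t := by
      by_contra hcon
      push_neg at hcon
      exact htN ⟨hcon.1, hcon.2⟩
    rcases htcase with hlt | hgt
    · rcases lt_or_ge ℓ M with hℓM | hℓM
      · -- ℓ < M : intervals equal
        have e1 : cumul b ℓ = cumul w ℓ := by
          unfold cumul
          exact Finset.sum_congr rfl fun k hk =>
            hagree k (lt_of_lt_of_le (Finset.mem_range.1 hk) (le_of_lt hℓM))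
        have e2 : cumul b (ℓ+1) = cumul w (ℓ+1) := by
          unfold cumul
          exact Finset.sum_congr rfl fun k hk =>
            hagree k (lt_of_lt_of_le (Finset.mem_range.1 hk) hℓM)
        rw [e1, e2]
      · -- M ≤ ℓ : both false
        have h1 : cumul w M ≤ cumul b ℓ := hcum_eq ▸ cumul_mono hb0 hℓM
        have h2 : cumul w M ≤ cumul w ℓ := cumul_mono hw0 hℓM
        constructor
        · rintro ⟨hl, -⟩; linarith
        · rintro ⟨hl, -⟩; linarith
    · have h1 : cumul b (ℓ+1) ≤ S := Summable.sum_le_tsum _ (fun k _ => hb0 k) hbs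
      have h2 : cumul w (ℓ+1) ≤ S :=
        le_trans (Summable.sum_le_tsum _ (fun k _ => hw0 k) hws) hwS
      constructor
      · rintro ⟨-, hr⟩; linarith
      · rintro ⟨-, hr⟩; linarith
  have hmain := pb_key n w b P id (MeasurePreserving.id pbMeas) (Icc (cumul w M) S) hcolor
  have hcwS : cumul w M ≤ S := le_trans (hcum_eq ▸ Summable.sum_le_tsum _ (fun k _ => hb0 k) hbs) le_rfl
  have hmeasN : (pbMeas (Icc (cumul w M) S)).toReal ≤ S - cumul w M := by
    have h1 : pbMeas (Icc (cumul w M) S) ≤ volume (Icc (cumul w M) S) := by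
      rw [pbMeas, Measure.restrict_apply measurableSet_Icc]
      exact measure_mono Set.inter_subset_left
    have h2 : volume (Icc (cumul w M) S) = ENNReal.ofReal (S - cumul w M) := by
      rw [Real.volume_Icc]
    calc (pbMeas (Icc (cumul w M) S)).toReal ≤ (volume (Icc (cumul w M) S)).toReal :=
          ENNReal.toReal_mono (by rw [h2]; exact ENNReal.ofReal_ne_top) h1
      _ = S - cumul w M := by rw [h2, ENNReal.toReal_ofReal (by linarith)]
  calc |paintbox n b P - paintbox n w P| ≤ n * (pbMeas (Icc (cumul w M) S)).toReal := hmain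
    _ ≤ n * (S - cumul w M) := mul_le_mul_of_nonneg_left hmeasN (Nat.cast_nonneg n)

lemma pb_chain (n : ℕ) (x w : ℕ → ℝ) (P : Fin n → Fin n → Prop)
    (hw0 : ∀ k, 0 ≤ w k) (hwx : ∀ k, w k ≤ x k) (hxs : Summable x) (hx1 : ∑' i, x i ≤ 1) :
    |paintbox n x P - paintbox n w P| ≤ n * ∑' k, (x k - w k) := by
  have hx0 : ∀ k, 0 ≤ x k := fun k => le_trans (hw0 k) (hwx k)
  have hws : Summable w := Summable.of_nonneg_of_le hw0 hwx hxs
  have hds : Summable (fun k => x k - w k) := hxs.sub hws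
  set z : ℕ → ℕ → ℝ := fun M k => if k < M then w k else x k with hz
  have hz0 : z 0 = x := by funext k; simp [hz]
  have hz0' : ∀ M k, 0 ≤ z M k := by
    intro M k
    by_cases h : k < M <;> simp [hz, h, hw0 k, hx0 k]
  have hzx : ∀ M k, z M k ≤ x k := by
    intro M k
    by_cases h : k < M <;> simp [hz, h, hwx k]
  have hwz : ∀ M k, w k ≤ z M k := by
    intro M k
    by_cases h : k < M <;> simp [hz, h, hwx k]
  have hzs : ∀ M, Summable (z M) := fun M => Summable.of_nonneg_of_le (hz0' M) (hzx M) hxs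
  have hcum_le : ∀ M ℓ, cumul (z M) ℓ ≤ 1 := by
    intro M ℓ
    calc cumul (z M) ℓ ≤ cumul x ℓ := Finset.sum_le_sum fun k _ => hzx M k
      _ ≤ ∑' k, x k := Summable.sum_le_tsum _ (fun k _ => hx0 k) hxs
      _ ≤ 1 := hx1
  have hzupd : ∀ M, z (M+1) = Function.update (z M) M (w M) := by
    intro M
    funext k
    by_cases hk : k = M
    · subst hk; simp [hz, Function.update_self]
    · rw [Function.update_of_ne hk]
      by_cases h2 : k < M
      · simp [hz, h2, Nat.lt_succ_of_lt h2]
      · have h3 : ¬ k < M + 1 := by omega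
        simp [hz, h2, h3]
  have hstep : ∀ M, |paintbox n (z (M+1)) P - paintbox n (z M) P| ≤ n * (x M - w M) := by
    intro M
    rw [hzupd M]
    have hzMM : z M M = x M := by simp [hz]
    have := pb_step n (z M) M (w M) P (hz0' M) (hw0 M) (by rw [hzMM]; exact hwx M)
      (hcum_le M)
    rwa [hzMM] at this
  have hind : ∀ M, |paintbox n x P - paintbox n (z M) P|
      ≤ n * ∑ k ∈ Finset.range M, (x k - w k) := by
    intro M
    induction M with
    | zero => simp [hz0]
    | succ M ih =>
        calc |paintbox n x P - paintbox n (z (M+1)) P|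
            ≤ |paintbox n x P - paintbox n (z M) P|
              + |paintbox n (z (M+1)) P - paintbox n (z M) P| := by
              rw [abs_sub_comm (paintbox n (z (M+1)) P)]
              exact abs_sub_le _ _ _
          _ ≤ n * ∑ k ∈ Finset.range M, (x k - w k) + n * (x M - w M) :=
              add_le_add ih (hstep M)
          _ = n * ∑ k ∈ Finset.range (M+1), (x k - w k) := by
              rw [Finset.sum_range_succ]; ring
  have htail : ∀ M, |paintbox n (z M) P - paintbox n w P|
      ≤ n * ((∑' k, x k) - cumul x M) := by
    intro M
    have hagree : ∀ k, k < M → z M k = w k := by intro k hk; simp [hz, hk]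
    have h1 := pb_tail n (z M) w M P (hz0' M) hw0 (hwz M) hagree (hzs M)
    have h2 : (∑' k, z M k) - cumul w M = (∑' k, x k) - cumul x M := by
      have e1 : (∑ k ∈ Finset.range M, z M k) + (∑' k, z M (k + M)) = ∑' k, z M k :=
        Summable.sum_add_tsum_nat_add M (hzs M)
      have e2 : (∑ k ∈ Finset.range M, x k) + (∑' k, x (k + M)) = ∑' k, x k :=
        Summable.sum_add_tsum_nat_add M hxs
      have e3 : ∀ k, z M (k + M) = x (k + M) := by
        intro k; simp [hz]
      have e4 : (∑ k ∈ Finset.range M, z M k) = cumul w M := by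
        unfold cumul
        exact Finset.sum_congr rfl fun k hk => by simp [hz, Finset.mem_range.1 hk]
      rw [tsum_congr e3] at e1
      unfold cumul
      rw [← e2, ← e1, e4]
      simp only [cumul]
      ring
    rwa [h2] at h1
  have hbound : ∀ M, |paintbox n x P - paintbox n w P|
      ≤ n * ∑' k, (x k - w k) + n * ((∑' k, x k) - cumul x M) := by
    intro M
    calc |paintbox n x P - paintbox n w P|
        ≤ |paintbox n x P - paintbox n (z M) P| + |paintbox n (z M) P - paintbox n w P| := by
          have := abs_sub_le (paintbox n x P) (paintbox n (z M) P) (paintbox n w P)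
          linarith [this]
      _ ≤ n * ∑ k ∈ Finset.range M, (x k - w k) + n * ((∑' k, x k) - cumul x M) :=
          add_le_add (hind M) (htail M)
      _ ≤ n * ∑' k, (x k - w k) + n * ((∑' k, x k) - cumul x M) := by
          have h1 : ∑ k ∈ Finset.range M, (x k - w k) ≤ ∑' k, (x k - w k) :=
            Summable.sum_le_tsum _ (fun k _ => by linarith [hwx k]) hds
          have h2 : (0:ℝ) ≤ n := Nat.cast_nonneg n
          nlinarith
  have hlim : Filter.Tendsto
      (fun M => n * ∑' k, (x k - w k) + n * ((∑' k, x k) - cumul x M))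
      Filter.atTop (nhds (n * ∑' k, (x k - w k))) := by
    have h1 : Filter.Tendsto (fun M => cumul x M) Filter.atTop (nhds (∑' k, x k)) :=
      hxs.hasSum.tendsto_sum_nat
    have h2 : Filter.Tendsto (fun M => n * ((∑' k, x k) - cumul x M))
        Filter.atTop (nhds (n * ((∑' k, x k) - (∑' k, x k)))) :=
      (Filter.Tendsto.const_sub _ h1).const_mul _
    simpa using Filter.Tendsto.const_add _ h2
  exact ge_of_tendsto hlim (Filter.Eventually.of_forall hbound)

/-- ℓ¹-Lipschitz bound for the Kingman paintbox kernel: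
`|κ∞ₙ(x,π) − κ∞ₙ(y,π)| ≤ n · Σ |x i − y i|`. -/
theorem stmt6 (n : ℕ) (x y : ℕ → ℝ)
    (hx0 : ∀ i, 0 ≤ x i) (hxa : Antitone x) (hxs : Summable x) (hx1 : ∑' i, x i ≤ 1)
    (hy0 : ∀ i, 0 ≤ y i) (hya : Antitone y) (hys : Summable y) (hy1 : ∑' i, y i ≤ 1)
    (P : Fin n → Fin n → Prop) (hP : Equivalence P) :
    |paintbox n x P - paintbox n y P| ≤ (n : ℝ) * ∑' i, |x i - y i| := by
  set w : ℕ → ℝ := fun k => min (x k) (y k) with hw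
  have hw0 : ∀ k, 0 ≤ w k := fun k => le_min (hx0 k) (hy0 k)
  have hwx : ∀ k, w k ≤ x k := fun k => min_le_left _ _
  have hwy : ∀ k, w k ≤ y k := fun k => min_le_right _ _
  have h1 := pb_chain n x w P hw0 hwx hxs hx1
  have h2 := pb_chain n y w P hw0 hwy hys hy1
  have hws : Summable w := Summable.of_nonneg_of_le hw0 hwx hxs
  have hd1 : Summable (fun k => x k - w k) := hxs.sub hws
  have hd2 : Summable (fun k => y k - w k) := hys.sub hws
  have hsum : (∑' k, (x k - w k)) + (∑' k, (y k - w k)) = ∑' i, |x i - y i| := by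
    rw [← Summable.tsum_add hd1 hd2]
    refine tsum_congr fun k => ?_
    rcases le_total (x k) (y k) with h | h
    · rw [hw]
      simp only [min_eq_left h]
      rw [abs_of_nonpos (by linarith)]
      ring
    · rw [hw]
      simp only [min_eq_right h]
      rw [abs_of_nonneg (by linarith)]
      ring
  calc |paintbox n x P - paintbox n y P|
      ≤ |paintbox n x P - paintbox n w P| + |paintbox n w P - paintbox n y P| :=
        abs_sub_le _ _ _
    _ ≤ (n : ℝ) * ∑' k, (x k - w k) + (n : ℝ) * ∑' k, (y k - w k) := by
        rw [abs_sub_comm (paintbox n w P)]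
        exact add_le_add h1 h2
    _ = (n : ℝ) * ∑' i, |x i - y i| := by rw [← hsum]; ring
end

section
/- Let N ≥ n ≥ 1 and x ∈ Δ^N. Then |κ^N_n(x,π) − κ∞_n(x,π)| ≤ n²/N for every partition π of [n], where κ^N_n(x,·) is the urn-without-replacement partition kernel and κ∞_n(x,·) is the Kingman paintbox (with-replacement) kernel. -/
open MeasureTheory Set

open scoped Classical in
/-- Urn-without-replacement partition kernel. -/
noncomputable def urnKernel (N n : ℕ) (c : Fin N → ℕ) (P : Fin n → Fin n → Prop) : ℝ :=
  ((Finset.univ.filter fun f : Fin n ↪ Fin N =>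
      ∀ i j, P i j ↔ c (f i) = c (f j)).card : ℝ) /
    (Fintype.card (Fin n ↪ Fin N) : ℝ)

/-!
Drawing `n` balls with replacement from the urn realises the paintbox: the points of `[0,1]ⁿ`
whose coordinates fall into the intervals of the colours `g 1, …, g n` form a box of volume
`∏ x (g i) = #{draws with these colours} / Nⁿ`. Hence `κ∞` is the proportion of the `Nⁿ` draws
inducing `π`, and `κᴺ` is the same proportion among the `N (N-1) ⋯ (N-n+1)` injective draws.
Conditioning on an event of probability `1 - δ` moves a probability by at most `δ`, and the
proportion `δ` of non-injective draws is at most `n² / N` by Bernoulli's inequality.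
-/

open Function Finset
open scoped ENNReal

lemma pow_sub_descFactorial_le {N n : ℕ} (hN : 0 < N) (hn : n ≤ N) :
    (N : ℝ) ^ n - N.descFactorial n ≤ (n : ℝ) ^ 2 / N * N ^ n := by
  have hN' : (0 : ℝ) < N := by exact_mod_cast hN
  have hn' : (n : ℝ) ≤ N := by exact_mod_cast hn
  have hlow : ((N : ℝ) + 1 - n) ^ n ≤ N.descFactorial n := by
    have := Nat.pow_sub_le_descFactorial N n
    rwa [← Nat.cast_le (α := ℝ), Nat.cast_pow, Nat.cast_sub (by omega), Nat.cast_add_one] at this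
  have hbern : 1 + n * -((n - 1) / N) ≤ (1 + -((n - 1 : ℝ) / N)) ^ n :=
    one_add_mul_le_pow (by
      have : (n - 1 : ℝ) / N ≤ 1 := (div_le_one hN').2 (by linarith)
      linarith) n
  have hscale : (1 + -((n - 1 : ℝ) / N)) ^ n * N ^ n = ((N : ℝ) + 1 - n) ^ n := by
    rw [← mul_pow]; congr 1; field_simp; ring
  have hdesc : (1 + n * -((n - 1) / N)) * (N : ℝ) ^ n ≤ N.descFactorial n :=
    (mul_le_mul_of_nonneg_right hbern (by positivity)).trans (hscale ▸ hlow)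
  have hsq : (n : ℝ) * ((n - 1) / N) ≤ n ^ 2 / N := by
    rw [mul_div_assoc', sq]; gcongr; linarith
  nlinarith [pow_pos hN' n]

lemma abs_div_sub_div_le_of_le_add {a b S T : ℝ} (hS : 0 < S) (hST : S ≤ T) (ha : 0 ≤ a)
    (haS : a ≤ S) (hab : a ≤ b) (hba : b ≤ a + (T - S)) :
    |a / S - b / T| ≤ (T - S) / T := by
  have hT : 0 < T := hS.trans_le hST
  have haT : a / T ≤ a / S := div_le_div_of_nonneg_left ha hS hST
  rw [abs_le]
  constructor
  · have : b / T ≤ a / T + (T - S) / T := by rw [← add_div]; gcongr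
    linarith
  · calc a / S - b / T ≤ a / S - a / T := by gcongr
      _ = a / S * ((T - S) / T) := by field_simp
      _ ≤ 1 * ((T - S) / T) :=
        mul_le_mul_of_nonneg_right ((div_le_one hS).2 haS) (div_nonneg (by linarith) hT.le)
      _ = (T - S) / T := one_mul _

lemma abs_card_inter_div_sub_card_div_le {α : Type*} [Fintype α] [DecidableEq α]
    {s : Finset α} (hs : s.Nonempty) (t : Finset α) :
    |(#(s ∩ t) : ℝ) / #s - #t / Fintype.card α| ≤
      (Fintype.card α - #s) / Fintype.card α := by
  have hcover : #t ≤ #(s ∩ t) + (Fintype.card α - #s) := by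
    rw [← card_compl]
    exact (Finset.card_le_card fun a ha ↦ by by_cases a ∈ s <;> simp_all).trans (card_union_le _ _)
  apply abs_div_sub_div_le_of_le_add (by exact_mod_cast hs.card_pos)
    (by exact_mod_cast card_le_univ s) (by positivity)
    (by exact_mod_cast Finset.card_le_card Finset.inter_subset_left)
    (by exact_mod_cast Finset.card_le_card Finset.inter_subset_right)
  rw [← Nat.cast_sub (card_le_univ s)]
  exact_mod_cast hcover

def paintboxInterval (x : ℕ → ℝ) (ℓ : ℕ) : Set ℝ := Ioo (cumul x ℓ) (cumul x ℓ + x ℓ)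

lemma measurableSet_paintboxInterval (x : ℕ → ℝ) (ℓ : ℕ) :
    MeasurableSet (paintboxInterval x ℓ) :=
  measurableSet_Ioo

section Paintbox

variable {x : ℕ → ℝ}

lemma cumul_add_self (x : ℕ → ℝ) (ℓ : ℕ) : cumul x ℓ + x ℓ = cumul x (ℓ + 1) :=
  (Finset.sum_range_succ x ℓ).symm

lemma monotone_cumul (hx0 : ∀ i, 0 ≤ x i) : Monotone (cumul x) :=
  monotone_nat_of_le_succ fun ℓ ↦ by rw [← cumul_add_self]; linarith [hx0 ℓ]

lemma pairwise_disjoint_paintboxInterval (hx0 : ∀ i, 0 ≤ x i) :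
    Pairwise (Disjoint on paintboxInterval x) := by
  refine (pairwise_disjoint_on _).2 fun ℓ ℓ' hlt ↦ Set.disjoint_left.2 fun t ht ht' ↦ ?_
  have := monotone_cumul hx0 (Nat.succ_le_of_lt hlt)
  rw [← cumul_add_self] at this
  linarith [ht.2, ht'.1]

lemma eq_of_mem_paintboxInterval (hx0 : ∀ i, 0 ≤ x i) {t : ℝ} {ℓ ℓ' : ℕ}
    (ht : t ∈ paintboxInterval x ℓ) (ht' : t ∈ paintboxInterval x ℓ') : ℓ = ℓ' :=
  by_contra fun h ↦ (pairwise_disjoint_paintboxInterval hx0 h).ne_of_mem ht ht' rfl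

lemma exists_mem_paintboxInterval_iff (hx0 : ∀ i, 0 ≤ x i) {s t : ℝ} {ℓ ℓ' : ℕ}
    (hs : s ∈ paintboxInterval x ℓ) (ht : t ∈ paintboxInterval x ℓ') :
    (∃ k, s ∈ paintboxInterval x k ∧ t ∈ paintboxInterval x k) ↔ ℓ = ℓ' :=
  ⟨fun ⟨_, hsk, htk⟩ ↦ (eq_of_mem_paintboxInterval hx0 hs hsk).trans
    (eq_of_mem_paintboxInterval hx0 ht htk).symm, fun h ↦ ⟨ℓ, hs, h ▸ ht⟩⟩

variable (hx0 : ∀ i, 0 ≤ x i) (hxs : Summable x) (hx1 : ∑' i, x i = 1)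
include hx0 hxs hx1

lemma paintboxInterval_subset_Icc (ℓ : ℕ) : paintboxInterval x ℓ ⊆ Icc 0 1 := by
  have h0 : 0 ≤ cumul x ℓ := Finset.sum_nonneg fun i _ ↦ hx0 i
  have h1 : cumul x (ℓ + 1) ≤ 1 := hx1 ▸ hxs.sum_le_tsum _ fun i _ ↦ hx0 i
  rw [← cumul_add_self] at h1
  exact fun t ht ↦ ⟨by linarith [ht.1], by linarith [ht.2]⟩

lemma volume_restrict_paintboxInterval (ℓ : ℕ) :
    volume.restrict (Icc (0 : ℝ) 1) (paintboxInterval x ℓ) = ENNReal.ofReal (x ℓ) := by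
  rw [Measure.restrict_apply (measurableSet_paintboxInterval x ℓ),
    inter_eq_left.2 (paintboxInterval_subset_Icc hx0 hxs hx1 ℓ), paintboxInterval,
    Real.volume_Ioo, add_sub_cancel_left]

lemma ae_exists_mem_paintboxInterval :
    ∀ᵐ t ∂volume.restrict (Icc (0 : ℝ) 1), ∃ ℓ, t ∈ paintboxInterval x ℓ := by
  have hmeas : MeasurableSet (⋃ ℓ, paintboxInterval x ℓ) :=
    .iUnion (measurableSet_paintboxInterval x)
  have hfull : volume.restrict (Icc (0 : ℝ) 1) (⋃ ℓ, paintboxInterval x ℓ) = 1 := by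
    rw [measure_iUnion (pairwise_disjoint_paintboxInterval hx0) (measurableSet_paintboxInterval x)]
    simp_rw [volume_restrict_paintboxInterval hx0 hxs hx1]
    rw [← ENNReal.ofReal_tsum_of_nonneg hx0 hxs, hx1, ENNReal.ofReal_one]
  have huniv : volume.restrict (Icc (0 : ℝ) 1) univ = 1 := by simp
  have hnull : volume.restrict (Icc (0 : ℝ) 1) (⋃ ℓ, paintboxInterval x ℓ)ᶜ = 0 := by
    rw [measure_compl hmeas (measure_ne_top _ _), huniv, hfull, tsub_self]
  exact measure_mono_null (fun t ht ↦ by simpa using ht) hnull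

def paintboxEvent {ι : Type*} (x : ℕ → ℝ) (P : ι → ι → Prop) : Set (ι → ℝ) :=
  {u | ∀ i j, P i j ↔ (i = j ∨ ∃ ℓ, u i ∈ paintboxInterval x ℓ ∧ u j ∈ paintboxInterval x ℓ)}

lemma paintboxEvent_ae_eq {ι : Type*} [Fintype ι] (P : ι → ι → Prop) :
    paintboxEvent x P =ᵐ[Measure.pi fun _ : ι ↦ volume.restrict (Icc (0 : ℝ) 1)]
      ⋃ (g : ι → ℕ) (_ : ∀ i j, P i j ↔ g i = g j), univ.pi fun i ↦ paintboxInterval x (g i) := by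
  have hae : ∀ᵐ u ∂Measure.pi fun _ : ι ↦ volume.restrict (Icc (0 : ℝ) 1),
      ∀ i, ∃ ℓ, u i ∈ paintboxInterval x ℓ :=
    ae_all_iff.2 fun i ↦ Measure.tendsto_eval_ae_ae.eventually
      (p := fun t ↦ ∃ ℓ, t ∈ paintboxInterval x ℓ) (ae_exists_mem_paintboxInterval hx0 hxs hx1)
  refine Filter.eventuallyEq_set.2 ?_
  filter_upwards [hae] with u hu
  choose g hg using hu
  have hpair : ∀ i j, (i = j ∨ ∃ ℓ, u i ∈ paintboxInterval x ℓ ∧ u j ∈ paintboxInterval x ℓ) ↔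
      g i = g j := fun i j ↦ by
    rw [exists_mem_paintboxInterval_iff hx0 (hg i) (hg j), or_iff_right_of_imp (congrArg g)]
  simp only [paintboxEvent, mem_ofPred_eq, hpair, mem_iUnion, mem_univ_pi, exists_prop]
  refine ⟨fun h ↦ ⟨g, h, hg⟩, fun ⟨g', hg', hu'⟩ ↦ ?_⟩
  obtain rfl : g' = g := funext fun i ↦ eq_of_mem_paintboxInterval hx0 (hu' i) (hg i)
  exact hg'

open scoped Classical in
lemma measure_paintboxEvent {ι : Type*} [Fintype ι] (P : ι → ι → Prop) :
    Measure.pi (fun _ : ι ↦ volume.restrict (Icc (0 : ℝ) 1)) (paintboxEvent x P) =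
      ∑' g : ι → ℕ, if ∀ i j, P i j ↔ g i = g j then ∏ i, ENNReal.ofReal (x (g i)) else 0 := by
  rw [measure_congr (paintboxEvent_ae_eq hx0 hxs hx1 P), measure_iUnion]
  · congr with g
    split_ifs with h
    · simp [h, Measure.pi_pi, volume_restrict_paintboxInterval hx0 hxs hx1]
    · simp [h]
  · intro g g' hne
    obtain ⟨i, hi⟩ := Function.ne_iff.1 hne
    refine Set.disjoint_left.2 fun u hu hu' ↦ hi ?_
    simp only [mem_iUnion, mem_univ_pi] at hu hu'
    exact eq_of_mem_paintboxInterval hx0 (hu.2 i) (hu'.2 i)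
  · exact fun g ↦ .iUnion fun _ ↦ .univ_pi fun i ↦ measurableSet_paintboxInterval x (g i)

end Paintbox

section Draws

variable {α β γ : Type*} [Fintype α] [Fintype β]

open scoped Classical in
noncomputable def drawsInducing [DecidableEq γ] (c : β → γ) (P : α → α → Prop) : Finset (α → β) :=
  {f | ∀ i j, P i j ↔ c (f i) = c (f j)}

lemma card_filter_forall_comp_eq [DecidableEq α] [DecidableEq γ] (c : β → γ) (g : α → γ) :
    #{f : α → β | ∀ i, c (f i) = g i} = ∏ i, #{b | c b = g i} := by
  rw [← Fintype.card_piFinset]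
  congr 1
  ext f
  simp [Fintype.mem_piFinset]

open scoped Classical in
lemma filter_drawsInducing_comp_eq [DecidableEq α] [DecidableEq γ] (c : β → γ)
    (P : α → α → Prop) (g : α → γ) :
    {f ∈ drawsInducing c P | (fun i ↦ c (f i)) = g} =
      if ∀ i j, P i j ↔ g i = g j then ({f | ∀ i, c (f i) = g i} : Finset (α → β)) else ∅ := by
  split_ifs with hg
  · ext f
    simp only [drawsInducing, mem_filter, Finset.mem_univ, true_and, funext_iff]
    exact ⟨And.right, fun hf ↦ ⟨fun i j ↦ by rw [hf i, hf j, hg], hf⟩⟩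
  · refine filter_false_of_mem fun f hf hfg ↦ hg fun i j ↦ ?_
    rw [← hfg]
    exact (mem_filter.1 hf).2 i j

open scoped Classical in
lemma tsum_ite_prod_card_eq_card_drawsInducing [DecidableEq α] [DecidableEq γ] (c : β → γ)
    (P : α → α → Prop) :
    ∑' g : α → γ, (if ∀ i j, P i j ↔ g i = g j then ∏ i, (#{b | c b = g i} : ℝ≥0∞) else 0) =
      #(drawsInducing c P) := by
  have hfiber : ∀ g : α → γ,
      (if ∀ i j, P i j ↔ g i = g j then ∏ i, (#{b | c b = g i} : ℝ≥0∞) else 0) =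
        #{f ∈ drawsInducing c P | (fun i ↦ c (f i)) = g} := fun g ↦ by
    rw [filter_drawsInducing_comp_eq]
    split_ifs <;> simp [card_filter_forall_comp_eq]
  simp_rw [hfiber]
  rw [tsum_eq_sum (s := (drawsInducing c P).image fun f i ↦ c (f i)),
    card_eq_sum_card_image (fun (f : α → β) i ↦ c (f i)), Nat.cast_sum]
  intro g hg
  simp only [Nat.cast_eq_zero, card_eq_zero, filter_eq_empty_iff]
  exact fun f hf hfg ↦ hg (mem_image.2 ⟨f, hf, hfg⟩)

end Draws

lemma card_filter_embedding {α β : Type*} [Fintype α] [DecidableEq α] [Fintype β]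
    [DecidableEq β] (Q : (α → β) → Prop) [DecidablePred Q] :
    #{e : α ↪ β | Q e} = #{f : α → β | Injective f ∧ Q f} := by
  refine card_bij (fun e _ ↦ ⇑e) (fun e he ↦ ?_) (fun _ _ _ _ h ↦ DFunLike.coe_injective h)
    fun f hf ↦ ?_
  · simp only [mem_filter, Finset.mem_univ, true_and] at he ⊢
    exact ⟨e.injective, he⟩
  · simp only [mem_filter, Finset.mem_univ, true_and] at hf
    exact ⟨⟨f, hf.1⟩, by simpa using hf.2, rfl⟩

lemma card_injective_fin (N n : ℕ) : #{f : Fin n → Fin N | Injective f} = N.descFactorial n := by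
  have := card_filter_embedding (α := Fin n) (β := Fin N) fun _ ↦ True
  simp only [filter_true, card_univ, and_true, Fintype.card_embedding_eq, Fintype.card_fin] at this
  exact this.symm

lemma urnKernel_eq_card_div (N n : ℕ) (c : Fin N → ℕ) (P : Fin n → Fin n → Prop) :
    urnKernel N n c P =
      #(({f | Injective f} : Finset (Fin n → Fin N)) ∩ drawsInducing c P) /
        #({f | Injective f} : Finset (Fin n → Fin N)) := by
  classical
  rw [urnKernel, card_injective_fin, Fintype.card_embedding_eq, Fintype.card_fin, Fintype.card_fin,
    card_filter_embedding fun f ↦ ∀ i j, P i j ↔ c (f i) = c (f j)]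
  congr 3
  ext f
  simp [drawsInducing]

lemma paintbox_eq_card_drawsInducing_div {N n : ℕ} (hN : 0 < N) {x : ℕ → ℝ}
    (hx0 : ∀ i, 0 ≤ x i) (hxs : Summable x) (hx1 : ∑' i, x i = 1) {c : Fin N → ℕ}
    (hc : ∀ ℓ, (#{a | c a = ℓ} : ℝ) = N * x ℓ) (P : Fin n → Fin n → Prop) :
    paintbox n x P = #(drawsInducing c P) / Fintype.card (Fin n → Fin N) := by
  have hN' : (0 : ℝ) < N := by exact_mod_cast hN
  have hx : ∀ ℓ, ENNReal.ofReal (x ℓ) = #{a | c a = ℓ} * (N : ℝ≥0∞)⁻¹ := fun ℓ ↦ by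
    rw [eq_div_of_mul_eq hN'.ne' ((hc ℓ).trans (mul_comm _ _)).symm, ENNReal.ofReal_div_of_pos hN',
      ENNReal.ofReal_natCast, ENNReal.ofReal_natCast, div_eq_mul_inv]
  have hterm : ∀ g : Fin n → ℕ, (∏ i, ENNReal.ofReal (x (g i))) =
      (∏ i, (#{a | c a = g i} : ℝ≥0∞)) * ((N : ℝ≥0∞) ^ n)⁻¹ := fun g ↦ by
    simp_rw [hx, prod_mul_distrib, prod_const, card_univ, Fintype.card_fin, ENNReal.inv_pow]
  change (Measure.pi _ (paintboxEvent x P)).toReal = _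
  simp_rw [measure_paintboxEvent hx0 hxs hx1, hterm, ← ite_zero_mul, ENNReal.tsum_mul_right,
    tsum_ite_prod_card_eq_card_drawsInducing, ENNReal.toReal_mul, ENNReal.toReal_inv,
    ENNReal.toReal_pow, ENNReal.toReal_natCast, Fintype.card_fun, Fintype.card_fin, div_eq_mul_inv,
    Nat.cast_pow]

theorem stmt8_general (N n : ℕ) (hn : 1 ≤ n) (hN : n ≤ N)
    (x : ℕ → ℝ)
    (hx0 : ∀ i, 0 ≤ x i) (hxs : Summable x) (hx1 : ∑' i, x i = 1)
    (c : Fin N → ℕ)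
    (hc : ∀ ℓ, ((Finset.univ.filter fun a => c a = ℓ).card : ℝ) = (N : ℝ) * x ℓ)
    (P : Fin n → Fin n → Prop) :
    |urnKernel N n c P - paintbox n x P| ≤ (n : ℝ) ^ 2 / N := by
  have hN0 : 0 < N := Nat.lt_of_lt_of_le hn hN
  have hinj : ({f | Injective f} : Finset (Fin n → Fin N)).Nonempty := by
    rw [← card_pos, card_injective_fin]
    exact Nat.descFactorial_pos.2 hN
  rw [urnKernel_eq_card_div, paintbox_eq_card_drawsInducing_div hN0 hx0 hxs hx1 hc]
  calc _ ≤ ((Fintype.card (Fin n → Fin N) : ℝ) - #{f : Fin n → Fin N | Injective f}) /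
        Fintype.card (Fin n → Fin N) := abs_card_inter_div_sub_card_div_le hinj _
    _ ≤ (n : ℝ) ^ 2 / N := by
      rw [card_injective_fin, Fintype.card_fun, Fintype.card_fin, Fintype.card_fin, Nat.cast_pow,
        div_le_iff₀ (by positivity)]
      exact pow_sub_descFactorial_le hN0 hN

/-- Coupling bound: `|κ^N_n(x,π) − κ∞_n(x,π)| ≤ n²/N` for `x ∈ Δ^N`. -/
theorem stmt8 (N n : ℕ) (hn : 1 ≤ n) (hN : n ≤ N)
    (x : ℕ → ℝ)
    (hx0 : ∀ i, 0 ≤ x i) (hxa : Antitone x) (hxs : Summable x) (hx1 : ∑' i, x i = 1)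
    (hxN : ∀ i, ∃ m : ℕ, (N : ℝ) * x i = m)
    (c : Fin N → ℕ)
    (hc : ∀ ℓ, ((Finset.univ.filter fun a => c a = ℓ).card : ℝ) = (N : ℝ) * x ℓ)
    (P : Fin n → Fin n → Prop) (hP : Equivalence P) :
    |urnKernel N n c P - paintbox n x P| ≤ (n : ℝ) ^ 2 / N :=
  stmt8_general N n hn hN x hx0 hxs hx1 c hc P
end

section
/- Let n ≥ 2, N ≥ n, ε ∈ (0, 1/n), and x ∈ Δ^N with x(1) ≤ ε (all family sizes at most εN). Then κ^N_2(x, {{1,2}})·(1 − nε)^n ≤ κ^N_n(x, {{1,2},{3},...,{n}}) ≤ κ^N_2(x, {{1,2}}), where κ^N_n(x,·) is the urn-without-replacement partition kernel. -/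
open Finset

open scoped Classical

theorem Fin.Embedding.card_filter_init_mem_last_mem {α : Type*} [Fintype α] {k : ℕ}
    (s : Finset (Fin k ↪ α)) (t : (Fin k ↪ α) → Finset α)
    (ht : ∀ g, ∀ a ∈ t g, a ∉ Set.range g) :
    #{f : Fin (k + 1) ↪ α | init f ∈ s ∧ f (Fin.last k) ∈ t (init f)} = ∑ g ∈ s, #(t g) := by
  rw [card_eq_sum_card_fiberwise (f := init) (t := s) (fun f hf => by simp_all)]
  refine sum_congr rfl fun g hg => ?_
  refine card_bij' (fun f _ => f (Fin.last k)) (fun a ha => snoc g (ht g a ha)) ?_ ?_ ?_ ?_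
  · intro f hf
    simp only [mem_filter, mem_univ, true_and] at hf
    exact hf.2 ▸ hf.1.2
  · intro a ha
    simp [init_snoc, snoc_last, hg, ha]
  · intro f hf
    simp only [mem_filter, mem_univ, true_and] at hf
    ext i
    induction i using Fin.lastCases with
    | last => simp [snoc_last]
    | cast i => rw [snoc_castSucc, ← hf.2]; rfl
  · intro a ha
    exact snoc_last

/-- The partition `{{1,2},{3},…,{k}}`, with the individuals numbered from `0`. -/
def firstPairRel (k : ℕ) (i j : Fin k) : Prop := i = j ∨ ((i : ℕ) < 2 ∧ (j : ℕ) < 2)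

section Coloring

variable {α : Type*} [Fintype α] {β : Type*} (c : α → β)

noncomputable def pairedSamples (k : ℕ) : Finset (Fin k ↪ α) :=
  {f | ∀ i j, firstPairRel k i j ↔ c (f i) = c (f j)}

noncomputable def colorAvoiding {k : ℕ} (g : Fin k ↪ α) : Finset α :=
  {a | ∀ i, c a ≠ c (g i)}

lemma firstPairRel_castSucc {k : ℕ} (i j : Fin k) :
    firstPairRel (k + 1) i.castSucc j.castSucc ↔ firstPairRel k i j := by
  simp [firstPairRel, Fin.castSucc_inj]

lemma not_firstPairRel_castSucc_last {k : ℕ} (hk : 2 ≤ k) (i : Fin k) :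
    ¬ firstPairRel (k + 1) i.castSucc (Fin.last k) := by
  simp only [firstPairRel, Fin.ext_iff, Fin.val_castSucc, Fin.val_last]
  omega

lemma firstPairRel_symm {k : ℕ} {i j : Fin k} (h : firstPairRel k i j) : firstPairRel k j i := by
  unfold firstPairRel at *
  tauto

lemma card_colorAvoiding_add_le {k : ℕ} (g : Fin k ↪ α) :
    #(colorAvoiding c g) + k ≤ Fintype.card α := by
  have hdisj : Disjoint (colorAvoiding c g) (univ.map g) := by
    simp only [disjoint_left, colorAvoiding, mem_filter, mem_univ, true_and, mem_map]
    rintro a ha ⟨i, -, rfl⟩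
    exact ha i rfl
  simpa [card_union_of_disjoint hdisj] using card_le_univ (colorAvoiding c g ∪ univ.map g)

variable {c}

lemma mem_pairedSamples_succ_iff {k : ℕ} (hk : 2 ≤ k) (f : Fin (k + 1) ↪ α) :
    f ∈ pairedSamples c (k + 1) ↔
      Fin.Embedding.init f ∈ pairedSamples c k ∧
        ∀ i, c (f (Fin.last k)) ≠ c (Fin.Embedding.init f i) := by
  have hlast (i : Fin k) : ¬ firstPairRel (k + 1) (Fin.last k) i.castSucc :=
    fun h => not_firstPairRel_castSucc_last hk i (firstPairRel_symm h)
  have hinit (i : Fin k) : Fin.Embedding.init f i = f i.castSucc := rfl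
  simp only [pairedSamples, mem_filter, mem_univ, true_and, Fin.forall_fin_succ',
    firstPairRel_castSucc, not_firstPairRel_castSucc_last hk, hlast, false_iff, hinit,
    forall_and, ne_eq, eq_comm (a := c (f (Fin.last k)))]
  simp [firstPairRel]

lemma card_pairedSamples_succ {k : ℕ} (hk : 2 ≤ k) :
    #(pairedSamples c (k + 1)) = ∑ g ∈ pairedSamples c k, #(colorAvoiding c g) := by
  have hrange (g : Fin k ↪ α) : ∀ a ∈ colorAvoiding c g, a ∉ Set.range g := by
    rintro a ha ⟨i, rfl⟩
    exact (mem_filter.1 ha).2 i rfl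
  rw [← Fin.Embedding.card_filter_init_mem_last_mem _ _ hrange]
  congr 1
  ext f
  simpa [colorAvoiding] using mem_pairedSamples_succ_iff hk f

lemma card_le_card_colorAvoiding_add [DecidableEq β] {k : ℕ} {M : ℝ}
    (hM : ∀ b, (#{a | c a = b} : ℝ) ≤ M) (g : Fin k ↪ α) :
    (Fintype.card α : ℝ) ≤ #(colorAvoiding c g) + k * M := by
  have hcover : (colorAvoiding c g)ᶜ ⊆ univ.biUnion fun i => {a | c a = c (g i)} := by
    intro a ha
    simpa [colorAvoiding] using ha
  have hcompl : (#(colorAvoiding c g)ᶜ : ℝ) ≤ k * M :=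
    calc (#(colorAvoiding c g)ᶜ : ℝ)
        ≤ ∑ i, (#{a | c a = c (g i)} : ℝ) := by
          exact_mod_cast (card_le_card hcover).trans card_biUnion_le
      _ ≤ ∑ _i : Fin k, M := sum_le_sum fun i _ => hM _
      _ = k * M := by simp
  rw [← card_add_card_compl (colorAvoiding c g)]
  push_cast
  linarith

end Coloring

lemma urnKernel_nonneg {N n : ℕ} {c : Fin N → ℕ} {P : Fin n → Fin n → Prop} :
    0 ≤ urnKernel N n c P := by
  unfold urnKernel
  positivity

section UrnKernel

variable {N : ℕ} {c : Fin N → ℕ}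

lemma urnKernel_firstPairRel (k : ℕ) :
    urnKernel N k c (firstPairRel k) = #(pairedSamples c k) / N.descFactorial k := by
  simp only [urnKernel, pairedSamples, Fintype.card_embedding_eq, Fintype.card_fin]
  congr

lemma urnKernel_firstPairRel_succ_le {k : ℕ} (hk : 2 ≤ k) (hkN : k < N) :
    urnKernel N (k + 1) c (firstPairRel (k + 1)) ≤ urnKernel N k c (firstPairRel k) := by
  have hS : #(pairedSamples c (k + 1)) ≤ (N - k) * #(pairedSamples c k) := by
    rw [card_pairedSamples_succ hk, mul_comm, ← smul_eq_mul]
    refine sum_le_card_nsmul _ _ _ fun g _ => ?_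
    have := card_colorAvoiding_add_le c g
    rw [Fintype.card_fin] at this
    omega
  have hNk : (0 : ℝ) < (N - k : ℕ) := by exact_mod_cast Nat.sub_pos_of_lt hkN
  rw [urnKernel_firstPairRel, urnKernel_firstPairRel, Nat.descFactorial_succ, Nat.cast_mul,
    ← mul_div_mul_left (#(pairedSamples c k) : ℝ) _ hNk.ne']
  gcongr
  exact_mod_cast hS

lemma le_urnKernel_firstPairRel_succ {n k : ℕ} {ε : ℝ} (hk : 2 ≤ k) (hkn : k ≤ n) (hkN : k < N)
    (hε : 0 ≤ ε) (hnε : n * ε ≤ 1) (hfam : ∀ ℓ, (#{a | c a = ℓ} : ℝ) ≤ ε * N) :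
    (1 - n * ε) * urnKernel N k c (firstPairRel k) ≤
      urnKernel N (k + 1) c (firstPairRel (k + 1)) := by
  have hNk : ((N - k : ℕ) : ℝ) = N - k := Nat.cast_sub hkN.le
  have hS : (#(pairedSamples c k) : ℝ) * ((N - k : ℕ) * (1 - n * ε)) ≤
      #(pairedSamples c (k + 1)) :=
    calc (#(pairedSamples c k) : ℝ) * ((N - k : ℕ) * (1 - n * ε))
        ≤ #(pairedSamples c k) * (N - k * (ε * N)) := by
          gcongr
          have hkn' : (k : ℝ) ≤ n := by exact_mod_cast hkn
          -- `(N - k)(1 - nε) = N - kεN - k(1 - nε) - (n - k)εN`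
          rw [hNk]
          nlinarith [mul_nonneg (mul_nonneg (Nat.cast_nonneg N) hε) (sub_nonneg.2 hkn'),
            mul_nonneg (Nat.cast_nonneg k) (sub_nonneg.2 hnε)]
      _ = ∑ _g ∈ pairedSamples c k, (N - k * (ε * N) : ℝ) := by rw [sum_const, nsmul_eq_mul]
      _ ≤ ∑ g ∈ pairedSamples c k, (#(colorAvoiding c g) : ℝ) := by
          apply sum_le_sum
          intro g _
          have := card_le_card_colorAvoiding_add hfam g
          rw [Fintype.card_fin] at this
          linarith
      _ = #(pairedSamples c (k + 1)) := by
          rw [card_pairedSamples_succ hk]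
          push_cast
          rfl
  have hNk_pos : (0 : ℝ) < (N - k : ℕ) := by exact_mod_cast Nat.sub_pos_of_lt hkN
  rw [urnKernel_firstPairRel, urnKernel_firstPairRel, Nat.descFactorial_succ, Nat.cast_mul,
    ← mul_div_assoc, ← mul_div_mul_left _ _ hNk_pos.ne']
  gcongr
  linarith

lemma urnKernel_firstPairRel_bounds {n m : ℕ} {ε : ℝ} (hm : 2 ≤ m) (hmn : m ≤ n) (hnN : n ≤ N)
    (hε : 0 ≤ ε) (hnε : n * ε ≤ 1) (hfam : ∀ ℓ, (#{a | c a = ℓ} : ℝ) ≤ ε * N) :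
    urnKernel N 2 c (firstPairRel 2) * (1 - n * ε) ^ (m - 2) ≤ urnKernel N m c (firstPairRel m) ∧
      urnKernel N m c (firstPairRel m) ≤ urnKernel N 2 c (firstPairRel 2) := by
  induction m, hm using Nat.le_induction with
  | base => simp
  | succ k hk ih =>
    obtain ⟨ihlow, ihup⟩ := ih (by omega)
    refine ⟨?_, (urnKernel_firstPairRel_succ_le hk (by omega)).trans ihup⟩
    calc urnKernel N 2 c (firstPairRel 2) * (1 - n * ε) ^ (k + 1 - 2)
        = (1 - n * ε) * (urnKernel N 2 c (firstPairRel 2) * (1 - n * ε) ^ (k - 2)) := by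
          rw [show k + 1 - 2 = k - 2 + 1 by omega, pow_succ]
          ring
      _ ≤ (1 - n * ε) * urnKernel N k c (firstPairRel k) := by gcongr
      _ ≤ urnKernel N (k + 1) c (firstPairRel (k + 1)) :=
          le_urnKernel_firstPairRel_succ hk (by omega) (by omega) hε hnε hfam

end UrnKernel

theorem stmt9_general (N n : ℕ) (hn : 2 ≤ n) (hN : n ≤ N)
    (ε : ℝ) (hε : 0 < ε) (hε' : ε < 1 / n)
    (x : ℕ → ℝ)
    (hxa : Antitone x)
    (hxε : x 0 ≤ ε)
    (c : Fin N → ℕ)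
    (hc : ∀ ℓ, ((Finset.univ.filter fun a => c a = ℓ).card : ℝ) = (N : ℝ) * x ℓ) :
    urnKernel N 2 c (fun _ _ => True) * (1 - n * ε) ^ n ≤
      urnKernel N n c (fun i j => i = j ∨ ((i : ℕ) < 2 ∧ (j : ℕ) < 2)) ∧
    urnKernel N n c (fun i j => i = j ∨ ((i : ℕ) < 2 ∧ (j : ℕ) < 2)) ≤
      urnKernel N 2 c (fun _ _ => True) := by
  have hnε : n * ε ≤ 1 := by
    rw [lt_div_iff₀ (by positivity)] at hε'
    linarith
  have hfam (ℓ : ℕ) : (#{a | c a = ℓ} : ℝ) ≤ ε * N := by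
    rw [hc, mul_comm]
    gcongr
    exact (hxa (Nat.zero_le ℓ)).trans hxε
  have hpair2 : (fun _ _ => True) = firstPairRel 2 := by
    ext i j
    simp [firstPairRel, i.isLt, j.isLt]
  obtain ⟨hlow, hup⟩ := urnKernel_firstPairRel_bounds hn le_rfl hN hε.le hnε hfam
  rw [hpair2]
  refine ⟨le_trans ?_ hlow, hup⟩
  have hpow : (1 - n * ε) ^ n ≤ (1 - n * ε) ^ (n - 2) :=
    pow_le_pow_of_le_one (by linarith) (sub_le_self _ (by positivity)) (Nat.sub_le n 2)
  exact mul_le_mul_of_nonneg_left hpow urnKernel_nonneg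

/-- Estimate (6.2): for `x ∈ Δ^N` with all family sizes at most `εN`,
`κ^N_2(x,{{1,2}})·(1 − nε)^n ≤ κ^N_n(x,{{1,2},{3},…,{n}}) ≤ κ^N_2(x,{{1,2}})`. -/
theorem stmt9 (N n : ℕ) (hn : 2 ≤ n) (hN : n ≤ N)
    (ε : ℝ) (hε : 0 < ε) (hε' : ε < 1 / n)
    (x : ℕ → ℝ)
    (hx0 : ∀ i, 0 ≤ x i) (hxa : Antitone x) (hxs : Summable x) (hx1 : ∑' i, x i = 1)
    (hxN : ∀ i, ∃ m : ℕ, (N : ℝ) * x i = m)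
    (hxε : x 0 ≤ ε)
    (c : Fin N → ℕ)
    (hc : ∀ ℓ, ((Finset.univ.filter fun a => c a = ℓ).card : ℝ) = (N : ℝ) * x ℓ) :
    urnKernel N 2 c (fun _ _ => True) * (1 - n * ε) ^ n ≤
      urnKernel N n c (fun i j => i = j ∨ ((i : ℕ) < 2 ∧ (j : ℕ) < 2)) ∧
    urnKernel N n c (fun i j => i = j ∨ ((i : ℕ) < 2 ∧ (j : ℕ) < 2)) ≤
      urnKernel N 2 c (fun _ _ => True) :=
  stmt9_general N n hn hN ε hε hε' x hxa hxε c hc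
end

section
/- Let n ≥ 3, N ≥ n, ε > 0, and x ∈ Δ^N with x(1) ≤ ε. For every partition π of [n] containing a block of size at least 3, κ^N_n(x, π) ≤ κ^N_2(x, {{1,2}})·(Nε − 2)/(N − 2). -/
open Finset Function

section EmbeddingRestriction

variable {ι κ α : Type*} [Fintype ι] [Fintype κ] [Fintype α] [DecidableEq α]

theorem card_filter_embedding_trans_eq_le (e : ι ↪ κ) (g : ι ↪ α) :
    #{f : κ ↪ α | e.trans f = g} ≤
      (Fintype.card α - Fintype.card ι).descFactorial (Fintype.card κ - Fintype.card ι) := by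
  classical
  have hcard : Fintype.card (↥(Set.range e)ᶜ ↪ ↥(Set.range g)ᶜ) =
      (Fintype.card α - Fintype.card ι).descFactorial (Fintype.card κ - Fintype.card ι) := by
    simp only [Fintype.card_embedding_eq, Fintype.card_compl_set, Fintype.card_range]
  rw [← hcard, ← Fintype.card_coe]
  have hres : ∀ f : {f // f ∈ ({f : κ ↪ α | e.trans f = g} : Finset _)}, ∀ i, f.1 (e i) = g i :=
    fun f i => DFunLike.congr_fun (mem_filter.mp f.2).2 i
  refine Fintype.card_le_of_injective (fun f => ⟨fun a => ⟨f.1 a, ?_⟩,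
    fun a b h => Subtype.ext (f.1.injective (congrArg Subtype.val h))⟩) ?_
  · rintro ⟨i, hi⟩
    exact a.2 ⟨i, f.1.injective (by rw [hres, hi])⟩
  · intro f f' h
    ext x
    by_cases hx : x ∈ Set.range e
    · obtain ⟨i, rfl⟩ := hx
      rw [hres, hres]
    · exact congrArg Subtype.val (DFunLike.congr_fun h ⟨x, hx⟩)

theorem card_filter_embedding_trans_mem_le (e : ι ↪ κ) (T : Finset (ι ↪ α)) :
    #{f : κ ↪ α | e.trans f ∈ T} ≤
      #T * (Fintype.card α - Fintype.card ι).descFactorial (Fintype.card κ - Fintype.card ι) := by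
  rw [mul_comm]
  refine card_le_mul_card_image_of_maps_to (f := e.trans) (fun f hf => (mem_filter.mp hf).2) _
    fun g _ => (card_le_card fun f hf => ?_).trans (card_filter_embedding_trans_eq_le e g)
  simpa using (mem_filter.mp hf).2

end EmbeddingRestriction

section Monochromatic

variable {α β : Type*} [Fintype α] [DecidableEq α] [DecidableEq β]

theorem card_monochromatic_fiber_init_add_le (c : α → β) {m : ℕ} (g : Fin (m + 1) ↪ α)
    (hg : ∀ i j, c (g i) = c (g j)) :
    #{f : Fin (m + 2) ↪ α | (∀ i j, c (f i) = c (f j)) ∧ Fin.Embedding.init f = g} + (m + 1) ≤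
      #{a | c a = c (g 0)} := by
  set fiber : Finset (Fin (m + 2) ↪ α) :=
    {f | (∀ i j, c (f i) = c (f j)) ∧ Fin.Embedding.init f = g}
  set cls : Finset α := {a | c a = c (g 0)}
  have hrange : univ.map g ⊆ cls := by
    intro a ha
    obtain ⟨i, -, rfl⟩ := mem_map.mp ha
    simpa [cls] using hg i 0
  have hinit : ∀ f ∈ fiber, ∀ i, f (Fin.castSucc i) = g i :=
    fun f hf i => DFunLike.congr_fun (mem_filter.mp hf).2.2 i
  have hmaps : Set.MapsTo (fun f : Fin (m + 2) ↪ α => f (Fin.last _)) fiber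
      (cls \ univ.map g : Finset α) := by
    intro f hf
    simp only [mem_coe, mem_sdiff, cls, mem_filter, mem_univ, true_and, mem_map, not_exists]
    refine ⟨?_, fun i hi => ?_⟩
    · rw [← hinit f hf]; exact (mem_filter.mp hf).2.1 _ _
    · rw [← hinit f hf] at hi
      exact Fin.castSucc_ne_last i (f.injective hi)
  have hinj : Set.InjOn (fun f : Fin (m + 2) ↪ α => f (Fin.last _)) fiber := by
    intro f hf f' hf' h
    ext i
    induction i using Fin.lastCases with
    | last => exact h
    | cast i => rw [hinit f hf, hinit f' hf']
  have hfiber := card_le_card_of_injOn _ hmaps hinj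
  have hg_card := card_le_card hrange
  rw [card_sdiff_of_subset hrange, card_map, card_univ, Fintype.card_fin] at hfiber
  rw [card_map, card_univ, Fintype.card_fin] at hg_card
  omega

theorem card_monochromatic_succ_le (c : α → β) (m : ℕ) {M : ℝ}
    (hM : ∀ a, (#{b | c b = c a} : ℝ) ≤ M) :
    (#{f : Fin (m + 2) ↪ α | ∀ i j, c (f i) = c (f j)} : ℝ) ≤
      #{g : Fin (m + 1) ↪ α | ∀ i j, c (g i) = c (g j)} * (M - (m + 1)) := by
  have hmaps : ∀ f ∈ ({f : Fin (m + 2) ↪ α | ∀ i j, c (f i) = c (f j)} : Finset _),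
      Fin.Embedding.init f ∈ ({g : Fin (m + 1) ↪ α | ∀ i j, c (g i) = c (g j)} : Finset _) := by
    intro f hf
    simp only [mem_filter, mem_univ, true_and] at hf ⊢
    exact fun i j => hf _ _
  rw [card_eq_sum_card_fiberwise hmaps, ← nsmul_eq_mul, ← sum_const]
  push_cast
  refine sum_le_sum fun g hg => ?_
  have hfiber := card_monochromatic_fiber_init_add_le c g (mem_filter.mp hg).2
  rw [filter_filter]
  have hfiber_real := (Nat.cast_le (α := ℝ)).mpr hfiber
  push_cast at hfiber_real
  linarith [hM (g 0)]

end Monochromatic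

theorem urnKernel_true (N m : ℕ) (c : Fin N → ℕ) :
    urnKernel N m c (fun _ _ => True) =
      #{f : Fin m ↪ Fin N | ∀ i j, c (f i) = c (f j)} / N.descFactorial m := by
  simp [urnKernel]

theorem urnKernel_true_succ_le {N m : ℕ} (hmN : m + 2 ≤ N) (c : Fin N → ℕ) {M : ℝ}
    (hM : ∀ a, (#{b | c b = c a} : ℝ) ≤ M) :
    urnKernel N (m + 2) c (fun _ _ => True) ≤
      urnKernel N (m + 1) c (fun _ _ => True) * ((M - (m + 1)) / (N - (m + 1))) := by
  have hN : ((m + 2 : ℕ) : ℝ) ≤ N := by exact_mod_cast hmN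
  push_cast at hN
  have hD : (N.descFactorial (m + 2) : ℝ) = (N - (m + 1)) * N.descFactorial (m + 1) := by
    rw [Nat.descFactorial_succ, Nat.cast_mul, Nat.cast_sub (by omega)]
    push_cast
    ring
  have hD_pos : (0 : ℝ) < N.descFactorial (m + 1) := by
    exact_mod_cast Nat.descFactorial_pos.mpr (by omega)
  have hgap_pos : (0 : ℝ) < N - (m + 1) := by linarith
  rw [urnKernel_true, urnKernel_true, hD, div_mul_div_comm, mul_comm ((N : ℝ) - _)]
  exact div_le_div_of_nonneg_right (card_monochromatic_succ_le c m hM) (by positivity)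

theorem urnKernel_le_urnKernel_true {N n m : ℕ} (hnN : n ≤ N) (c : Fin N → ℕ)
    (P : Fin n → Fin n → Prop) (e : Fin m ↪ Fin n) (he : ∀ a b, P (e a) (e b)) :
    urnKernel N n c P ≤ urnKernel N m c (fun _ _ => True) := by
  classical
  have hmn : m ≤ n := by simpa using Fintype.card_le_of_embedding e
  set F := (N - m).descFactorial (n - m)
  have hF : (0 : ℝ) < F := by exact_mod_cast Nat.descFactorial_pos.mpr (by omega)
  have hD : N.descFactorial n = F * N.descFactorial m :=
    (Nat.descFactorial_mul_descFactorial hmn).symm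
  have hcount : #{f : Fin n ↪ Fin N | ∀ i j, P i j ↔ c (f i) = c (f j)} ≤
      #{g : Fin m ↪ Fin N | ∀ i j, c (g i) = c (g j)} * F := by
    refine (card_le_card fun f hf => ?_).trans
      (by simpa using card_filter_embedding_trans_mem_le e {g | ∀ i j, c (g i) = c (g j)})
    simp only [mem_filter, mem_univ, true_and] at hf ⊢
    exact fun i j => (hf _ _).mp (he i j)
  rw [urnKernel, urnKernel_true, Fintype.card_embedding_eq, Fintype.card_fin, Fintype.card_fin, hD,
    Nat.cast_mul, ← div_div]
  refine div_le_div_of_nonneg_right ?_ (Nat.cast_nonneg _)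
  rw [div_le_iff₀ hF]
  exact_mod_cast hcount

theorem stmt10_general (N n : ℕ) (hn : 3 ≤ n) (hN : n ≤ N)
    (ε : ℝ)
    (x : ℕ → ℝ)
    (hxa : Antitone x)
    (hxε : x 0 ≤ ε)
    (c : Fin N → ℕ)
    (hc : ∀ ℓ, ((Finset.univ.filter fun a => c a = ℓ).card : ℝ) = (N : ℝ) * x ℓ)
    (P : Fin n → Fin n → Prop) (hP : Equivalence P)
    (hblock : ∃ i j k : Fin n, i ≠ j ∧ i ≠ k ∧ j ≠ k ∧ P i j ∧ P j k) :
    urnKernel N n c P ≤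
      urnKernel N 2 c (fun _ _ => True) * (((N : ℝ) * ε - 2) / ((N : ℝ) - 2)) := by
  obtain ⟨i, j, k, hij, hik, hjk, hPij, hPjk⟩ := hblock
  let e : Fin 3 ↪ Fin n := ⟨![i, j, k], by
    intro a b h
    fin_cases a <;> fin_cases b <;> simp_all [eq_comm]⟩
  have hPj : ∀ a, P (e a) j := by
    intro a
    fin_cases a
    exacts [hPij, hP.refl j, hP.symm hPjk]
  have hclass : ∀ a, (#{b | c b = c a} : ℝ) ≤ N * ε := fun a => by
    rw [hc]
    exact mul_le_mul_of_nonneg_left ((hxa (Nat.zero_le _)).trans hxε) (Nat.cast_nonneg N)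
  calc urnKernel N n c P ≤ urnKernel N 3 c (fun _ _ => True) :=
        urnKernel_le_urnKernel_true hN c P e fun a b => hP.trans (hPj a) (hP.symm (hPj b))
    _ ≤ urnKernel N 2 c (fun _ _ => True) * ((N * ε - 2) / (N - 2)) := by
        simpa [one_add_one_eq_two] using urnKernel_true_succ_le (m := 1) (hn.trans hN) c hclass

/-- For `x ∈ Δ^N` with all family sizes at most `εN` and a partition `π` of `[n]`
containing a block of size at least `3`,
`κ^N_n(x,π) ≤ κ^N_2(x,{{1,2}})·(Nε − 2)/(N − 2)`. -/
theorem stmt10 (N n : ℕ) (hn : 3 ≤ n) (hN : n ≤ N)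
    (ε : ℝ) (hε : 0 < ε)
    (x : ℕ → ℝ)
    (hx0 : ∀ i, 0 ≤ x i) (hxa : Antitone x) (hxs : Summable x) (hx1 : ∑' i, x i = 1)
    (hxN : ∀ i, ∃ m : ℕ, (N : ℝ) * x i = m)
    (hxε : x 0 ≤ ε)
    (c : Fin N → ℕ)
    (hc : ∀ ℓ, ((Finset.univ.filter fun a => c a = ℓ).card : ℝ) = (N : ℝ) * x ℓ)
    (P : Fin n → Fin n → Prop) (hP : Equivalence P)
    (hblock : ∃ i j k : Fin n, i ≠ j ∧ i ≠ k ∧ j ≠ k ∧ P i j ∧ P j k) :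
    urnKernel N n c P ≤
      urnKernel N 2 c (fun _ _ => True) * (((N : ℝ) * ε - 2) / ((N : ℝ) - 2)) :=
  stmt10_general N n hn hN ε x hxa hxε c hc P hP hblock
end

section
/- Let N ≥ 2, let (r,v) with r a semi-metric on [N] and v : [N] → ℝ≥0 such that α(r,v) defined by α(r,v)(i,j) = (v(i) + r(i,j) + v(j))·1_{i≠j} is a semi-ultrametric. Let σ be a semi-partition of [N], and define (r',v') by v'(i) = v(σ(i))·1_{i ∉ ∪σ} and r'(i,j) = (v(σ(i))·1_{i ∈ ∪σ} + r(σ(i),σ(j)) + v(σ(j))·1_{j ∈ ∪σ})·1_{i≠j}, where σ(i) denotes the index map induced by the partition completing σ with singletons. Then r' satisfies the triangle inequality r'(i,k) ≤ r'(i,j) + r'(j,k) for all i,j,k ∈ [N]. -/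
open scoped Classical in
/-- Applying a semi-partition transformation to a decomposed semi-ultrametric
`(r,v)` (with index map `s` and ground set `D = ∪σ`) yields a pair whose first
component again satisfies the triangle inequality. -/
theorem stmt17 (N : ℕ) (hN : 2 ≤ N) (r : Fin N → Fin N → ℝ) (v : Fin N → ℝ)
    (hr_nn : ∀ i j, 0 ≤ r i j) (hr_sym : ∀ i j, r i j = r j i)
    (hr_diag : ∀ i, r i i = 0) (hr_tri : ∀ i j k, r i k ≤ r i j + r j k)
    (hv : ∀ i, 0 ≤ v i)
    (hultra : ∀ i j k,
      (if i = k then 0 else v i + r i k + v k) ≤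
        max (if i = j then 0 else v i + r i j + v j)
          (if j = k then 0 else v j + r j k + v k))
    (s : Fin N → Fin N) (D : Set (Fin N))
    (r' : Fin N → Fin N → ℝ) (v' : Fin N → ℝ)
    (hv' : ∀ i, v' i = if i ∈ D then 0 else v (s i))
    (hr' : ∀ i j, r' i j = if i = j then 0 else
      (if i ∈ D then v (s i) else 0) + r (s i) (s j) + (if j ∈ D then v (s j) else 0)) :
    ∀ i j k, r' i k ≤ r' i j + r' j k := by
  intro i j k
  have ha : ∀ l : Fin N, 0 ≤ (if l ∈ D then v (s l) else 0) := by
    intro l; split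
    · exact hv _
    · exact le_refl _
  have hnn : ∀ a b, 0 ≤ r' a b := by
    intro a b
    rw [hr']
    split
    · exact le_refl _
    · have := hr_nn (s a) (s b); have := ha a; have := ha b; linarith
  by_cases hik : i = k
  · have h1 := hnn i j
    have h2 := hnn j k
    rw [hr' i k, if_pos hik]
    linarith
  · rw [hr' i k, hr' i j, hr' j k, if_neg hik]
    by_cases hij : i = j
    · subst hij
      rw [if_pos rfl, if_neg hik]
      linarith
    · rw [if_neg hij]
      by_cases hjk : j = k
      · subst hjk
        rw [if_pos rfl]
        linarith
      · rw [if_neg hjk]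
        have := hr_tri (s i) (s j) (s k)
        have := ha j
        linarith
end
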